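/- Let Q_{w_0} = conv{**z** : z ∈ S_n} be the permutahedron and let O_ρ be the orientation of its 1-skeleton induced by ρ = (n, n−1, …, 1). Then the 1-skeleton poset P(Q_{w_0}, O_ρ) equals the right weak order on S_n (u ≤_R v if and only if ℓ(u) + ℓ(u^{-1}v) = ℓ(v)), and O_ρ is the Hasse diagram (transitive reduction) of this poset. -/

import Mathlib

open Relation

/-- The symmetric group `S_n`, realized as permutations of `Fin n`. -/
abbrev SymGrp (n : ℕ) := Equiv.Perm (Fin n)

/-- Coxeter length of a permutation: its number of inversions. -/
def invLen {n : ℕ} (z : SymGrp n) : ℕ :=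
  (Finset.univ.filter (fun p : Fin n × Fin n => p.1 < p.2 ∧ z p.2 < z p.1)).card

/-- Bruhat order on `S_n`: generated by multiplication by a transposition which
increases length. -/
def bruhatLE {n : ℕ} (u v : SymGrp n) : Prop :=
  Relation.ReflTransGen
    (fun a b => (∃ t : SymGrp n, t.IsSwap ∧ b = a * t) ∧ invLen a < invLen b) u v

/-- The point `**z** = (z⁻¹(1), …, z⁻¹(n)) ∈ ℝⁿ` associated to a permutation
(indices shifted to be 1-based). -/
def pvec {n : ℕ} (z : SymGrp n) : Fin n → ℝ := fun i => (((z⁻¹ i : Fin n) : ℕ) : ℝ) + 1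

/-- The Bruhat interval polytope `Q_{u,v}`. -/
def BIP {n : ℕ} (u v : SymGrp n) : Set (Fin n → ℝ) :=
  convexHull ℝ {x | ∃ z : SymGrp n, bruhatLE u z ∧ bruhatLE z v ∧ x = pvec z}

/-- The Bruhat interval polytope `Q_w = Q_{e,w}`. -/
def BIPw {n : ℕ} (w : SymGrp n) : Set (Fin n → ℝ) := BIP 1 w

/-- The segment from `x` to `y` is an edge (1-dimensional exposed face; i.e. an
exposed face which is a segment between two distinct points) of `Q`. -/
def IsEdgeOf {n : ℕ} (Q : Set (Fin n → ℝ)) (x y : Fin n → ℝ) : Prop :=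
  x ≠ y ∧ IsExposed ℝ Q (segment ℝ x y)

/-- Cover relation `u ⋖_w v` of the poset `P_w`: both lie in `[e,w]`,
`ℓ(v) = ℓ(u) + 1`, and the segment from `**u**` to `**v**` is an edge of `Q_w`. -/
def covW {n : ℕ} (w u v : SymGrp n) : Prop :=
  bruhatLE u w ∧ bruhatLE v w ∧ invLen v = invLen u + 1 ∧
    IsEdgeOf (BIPw w) (pvec u) (pvec v)

/-- The order `≤_w` of the poset `P_w`, generated by the cover relations `⋖_w`. -/
def lew {n : ℕ} (w : SymGrp n) (u v : SymGrp n) : Prop :=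
  Relation.ReflTransGen (covW w) u v

/-- The set `A_w(u,v)` of atoms of the interval `[u,v]_w`: elements of the
interval covering `u` in `P_w`. -/
def atomsW {n : ℕ} (w u v : SymGrp n) : Set (SymGrp n) :=
  {a | lew w u a ∧ a ≠ u ∧ lew w a v ∧ ∀ z, lew w u z → lew w z a → z = u ∨ z = a}

/-- The cost vector `ρ = (n, n-1, …, 1)`. -/
def rho (n : ℕ) : Fin n → ℝ := fun i => (n : ℝ) - ((i : ℕ) : ℝ)

/-- The orientation `O_ρ` of the 1-skeleton of `Q_w`: an edge is directed toward
the endpoint with larger inner product with `ρ`. -/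
def orho {n : ℕ} (w : SymGrp n) (x y : Fin n → ℝ) : Prop :=
  IsEdgeOf (BIPw w) x y ∧ (∑ i, rho n i * x i) < (∑ i, rho n i * y i)

/-- `F` is the (unique) minimal exposed face of `Q_w` containing the vertex `**u**`
and the edges from `**u**` to `**a**` for `a ∈ T`. -/
def MinFaceW {n : ℕ} (w u : SymGrp n) (T : Set (SymGrp n)) (F : Set (Fin n → ℝ)) : Prop :=
  IsExposed ℝ (BIPw w) F ∧ pvec u ∈ F ∧ (∀ a ∈ T, segment ℝ (pvec u) (pvec a) ⊆ F) ∧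
    ∀ F', IsExposed ℝ (BIPw w) F' → pvec u ∈ F' → (∀ a ∈ T, segment ℝ (pvec u) (pvec a) ⊆ F') →
      F ⊆ F'

/-- `j` is the join in the lattice `P_w` of the set `S` together with `u`
(so the join of the empty set is `u`): i.e. `j` is the least upper bound in `P_w`
of `S ∪ {u}`. -/
def IsJoinW {n : ℕ} (w u : SymGrp n) (S : Set (SymGrp n)) (j : SymGrp n) : Prop :=
  bruhatLE j w ∧ lew w u j ∧ (∀ a ∈ S, lew w a j) ∧
    ∀ z, bruhatLE z w → lew w u z → (∀ a ∈ S, lew w a z) → lew w j z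

/-- The permutahedron: the convex hull of the points `**z**` for `z ∈ S_n`. -/
def PermPoly (n : ℕ) : Set (Fin n → ℝ) :=
  convexHull ℝ {x | ∃ z : SymGrp n, x = pvec z}

/-- The orientation `O_ρ` of the 1-skeleton of the permutahedron: each edge is
directed toward the endpoint with larger inner product with `ρ = (n, …, 1)`. -/
def oPerm (n : ℕ) (x y : Fin n → ℝ) : Prop :=
  (x ≠ y ∧ IsExposed ℝ (PermPoly n) (segment ℝ x y)) ∧
    (∑ i, rho n i * x i) < (∑ i, rho n i * y i)

/-- Right weak order on `S_n`: `u ≤_R v` iff `ℓ(u) + ℓ(u⁻¹ v) = ℓ(v)`. -/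
def wleR {n : ℕ} (u v : SymGrp n) : Prop :=
  invLen u + invLen (u⁻¹ * v) = invLen v

/-!
A vertex `**z**` maximises `c ⬝ᵥ ·` on the permutahedron only if `z⁻¹` is increasing along `c`,
and swapping two coordinates on which `c` ties preserves maximality. If an exposed segment has
vertices `**u**` and `**v**`, an adjacent descent `a ⋖ b` of `v⁻¹ u` is such a tie, so
`**v** = **u s**` for the adjacent transposition `s = (a b)`; conversely the weights `u⁻¹`, with
position `b` merged into `a`, expose the segment from `**u**` to `**u s**`. Along it `ρ` increases
by `u b - u a`, which is positive exactly when `ℓ(u s) = ℓ(u) + 1`. So `O_ρ` is the relation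
`u → u s` with `ℓ(u s) = ℓ(u) + 1`, the cover relation of the right weak order, whose
reflexive-transitive closure is the weak order.
-/

open Equiv Finset Relation

theorem Relation.reflTransGen_map_iff {α β : Type*} {r : α → α → Prop} {f : α → β}
    (hf : Function.Injective f) {a b : α} :
    ReflTransGen (Relation.Map r f f) (f a) (f b) ↔ ReflTransGen r a b := by
  refine ⟨fun h => ?_, fun h => ReflTransGen.lift f (fun a b h => ⟨a, b, h, rfl, rfl⟩) a b h⟩
  suffices ∀ y, ReflTransGen (Relation.Map r f f) (f a) y → ∀ b, f b = y → ReflTransGen r a b from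
    this _ h b rfl
  intro y hy
  induction hy with
  | refl => exact fun b hb => hf hb ▸ .refl
  | tail _ hstep ih =>
    obtain ⟨c, d, hcd, rfl, rfl⟩ := hstep
    exact fun b hb => hf hb ▸ (ih c rfl).tail hcd

theorem Fin.val_eq_val_add_one_of_covBy {n : ℕ} {a b : Fin n} (h : a ⋖ b) : (b : ℕ) = a + 1 :=
  (Nat.covBy_iff_add_one_eq.1 (Fin.covBy_iff.1 h)).symm

section SwapOrder

variable {α : Type*} [LinearOrder α] {a b x y : α}

theorem swap_lt_swap_iff_of_covBy (hab : a ⋖ b) (h₁ : ¬(x = a ∧ y = b)) (h₂ : ¬(x = b ∧ y = a)) :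
    swap a b x < swap a b y ↔ x < y := by
  have := hab.lt
  have := @hab.2
  simp only [swap_apply_def]
  split_ifs <;> subst_vars <;> grind

theorem Equiv.Perm.eq_one_of_strictMono [Finite α] {σ : Perm α} (h : StrictMono σ) : σ = 1 :=
  Equiv.ext fun x => congrFun h.eq_id x

theorem Equiv.Perm.exists_covBy_lt_of_ne_one [Finite α] [LocallyFiniteOrder α] {σ : Perm α}
    (h : σ ≠ 1) : ∃ a b, a ⋖ b ∧ σ b < σ a := by
  by_contra! hmono
  refine h (Perm.eq_one_of_strictMono ((strictMono_iff_forall_covBy σ).2 fun a b hab => ?_))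
  exact (hmono a b hab).lt_of_ne (σ.injective.ne hab.ne)

theorem Equiv.Perm.eq_one_or_eq_swap [Finite α] {σ : Perm α} (hab : a ⋖ b)
    (h : ∀ x y, x < y → ¬(x = a ∧ y = b) → σ x < σ y) : σ = 1 ∨ σ = swap a b := by
  have not_rev : ∀ {x y}, x < y → ¬(x = b ∧ y = a) := fun hxy ⟨hx, hy⟩ =>
    (hx ▸ hy ▸ hxy).not_gt hab.lt
  rcases (σ.injective.ne hab.ne).lt_or_gt with hlt | hgt
  · refine .inl (Perm.eq_one_of_strictMono fun x y hxy => ?_)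
    by_cases hxy' : x = a ∧ y = b
    · rwa [hxy'.1, hxy'.2]
    · exact h x y hxy hxy'
  · have hmono : StrictMono (σ * swap a b) := fun x y hxy => by
      by_cases hxy' : x = a ∧ y = b
      · simpa [hxy'.1, hxy'.2] using hgt
      refine h _ _ ((swap_lt_swap_iff_of_covBy hab hxy' (not_rev hxy)).2 hxy) fun ⟨hx, hy⟩ => ?_
      rw [swap_apply_eq_iff, swap_apply_left] at hx
      rw [swap_apply_eq_iff, swap_apply_right] at hy
      exact not_rev hxy ⟨hx, hy⟩
    exact .inr (by simpa using mul_eq_one_iff_eq_inv.1 (Perm.eq_one_of_strictMono hmono))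

end SwapOrder

section ExposedFaces

variable {E : Type*} [AddCommGroup E] [Module ℝ E]

theorem left_mem_extremePoints_segment (x y : E) : x ∈ (segment ℝ x y).extremePoints ℝ := by
  refine ⟨left_mem_segment ℝ x y, ?_⟩
  rintro _ ⟨a₁, b₁, ha₁, hb₁, hab₁, rfl⟩ _ ⟨a₂, b₂, ha₂, hb₂, hab₂, rfl⟩ ⟨a, b, ha, hb, hab, hx⟩
  rcases eq_or_ne x y with rfl | hxy
  · simp [← add_smul, hab₁]
  obtain rfl : a₁ = 1 - b₁ := by linarith
  obtain rfl : a₂ = 1 - b₂ := by linarith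
  obtain rfl : a = 1 - b := by linarith
  have hdir : ((1 - b) * b₁ + b * b₂) • (y - x) = 0 := by
    linear_combination (norm := module) hx
  have ht := (smul_eq_zero.1 hdir).resolve_right (sub_ne_zero.2 hxy.symm)
  obtain rfl : b₁ = 0 := by nlinarith
  obtain rfl : b₂ = 0 := by nlinarith
  simp

variable [TopologicalSpace E]

theorem ContinuousLinearMap.inter_toExposed_convexHull (l : StrongDual ℝ E) (s : Set E) :
    s ∩ l.toExposed (convexHull ℝ s) = {x ∈ s | ∀ y ∈ s, l y ≤ l x} := by
  ext x
  refine ⟨fun ⟨hx, _, hmax⟩ => ⟨hx, fun y hy => hmax y (subset_convexHull ℝ s hy)⟩,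
    fun ⟨hx, hmax⟩ => ⟨hx, subset_convexHull ℝ s hx, fun y hy => ?_⟩⟩
  exact convexHull_min hmax (convex_halfSpace_le l.toLinearMap.isLinear (l x)) hy

variable [IsTopologicalAddGroup E] [ContinuousSMul ℝ E]
  [LocallyConvexSpace ℝ E] [T2Space E] {s F : Set E}

theorem IsExposed.eq_convexHull_inter (hs : s.Finite) (hF : IsExposed ℝ (convexHull ℝ s) F) :
    F = convexHull ℝ (s ∩ F) := by
  have hFc := hF.isCompact (hs.isCompact_convexHull ℝ)
  have hFconv := hF.convex (convex_convexHull ℝ s)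
  refine subset_antisymm ?_ (convexHull_min Set.inter_subset_right hFconv)
  have hext : F.extremePoints ℝ ⊆ s ∩ F := fun x hx =>
    ⟨extremePoints_convexHull_subset (hF.isExtreme.extremePoints_subset_extremePoints hx), hx.1⟩
  calc F = closure (convexHull ℝ (F.extremePoints ℝ)) :=
        (closure_convexHull_extremePoints hFc hFconv).symm
    _ ⊆ closure (convexHull ℝ (s ∩ F)) := closure_mono (convexHull_mono hext)
    _ = convexHull ℝ (s ∩ F) := ((hs.inter_of_left F).isCompact_convexHull ℝ).isClosed.closure_eq

end ExposedFaces

section Length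

variable {n : ℕ}

def inversions (z : SymGrp n) : Finset (Fin n × Fin n) :=
  univ.filter fun p => p.1 < p.2 ∧ z p.2 < z p.1

theorem invLen_eq_card (z : SymGrp n) : invLen z = #(inversions z) := rfl

@[simp]
theorem mem_inversions {z : SymGrp n} {p : Fin n × Fin n} :
    p ∈ inversions z ↔ p.1 < p.2 ∧ z p.2 < z p.1 := by
  simp [inversions]

theorem invLen_inv (z : SymGrp n) : invLen z⁻¹ = invLen z :=
  card_nbij' (fun p => (z⁻¹ p.2, z⁻¹ p.1)) (fun p => (z p.2, z p.1))
    (fun p hp => by simp_all) (fun p hp => by simp_all) (fun p _ => by simp) (fun p _ => by simp)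

theorem invLen_mul_le (x y : SymGrp n) : invLen (x * y) ≤ invLen x + invLen y := by
  have hsub : inversions (x * y) ⊆ (inversions x).map (Equiv.prodCongr y.symm y.symm).toEmbedding ∪
      inversions y := by
    intro p hp
    simp only [mem_inversions, Perm.mul_apply] at hp
    rcases (y.injective.ne hp.1.ne).lt_or_gt with hlt | hgt
    · simp [mem_map_equiv, hp.2, hlt]
    · simp [hp.1, hgt]
  calc invLen (x * y) ≤ #((inversions x).map (Equiv.prodCongr y.symm y.symm).toEmbedding ∪
        inversions y) := card_le_card hsub
    _ ≤ invLen x + invLen y := (card_union_le _ _).trans_eq (by rw [card_map]; rfl)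

theorem invLen_eq_zero_iff {z : SymGrp n} : invLen z = 0 ↔ z = 1 := by
  refine ⟨fun h => Perm.eq_one_of_strictMono fun i j hij => ?_, by
    rintro rfl; exact card_eq_zero.2 (filter_false_of_mem fun p _ h => lt_asymm h.1 h.2)⟩
  by_contra hji
  have : (i, j) ∈ inversions z :=
    mem_inversions.2 ⟨hij, (not_lt.1 hji).lt_of_ne (z.injective.ne hij.ne')⟩
  rw [invLen_eq_card, card_eq_zero] at h
  simp [h] at this

theorem invLen_one : invLen (1 : SymGrp n) = 0 := invLen_eq_zero_iff.2 rfl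

variable {u : SymGrp n} {a b : Fin n}

theorem invLen_mul_swap_of_lt (hab : a ⋖ b) (h : u a < u b) :
    invLen (u * swap a b) = invLen u + 1 := by
  have hinv : inversions (u * swap a b) =
      insert (a, b) ((inversions u).map (Equiv.prodCongr (swap a b) (swap a b)).toEmbedding) := by
    ext ⟨x, y⟩
    simp only [mem_insert, mem_map_equiv, mem_inversions, Perm.mul_apply, Prod.mk.injEq,
      prodCongr_symm, symm_swap, prodCongr_apply, Prod.map]
    by_cases h₁ : x = a ∧ y = b
    · simp [h₁, hab.lt, h]
    by_cases h₂ : x = b ∧ y = a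
    · simp [h₂, hab.ne', h.not_gt, hab.lt.not_gt]
    rw [swap_lt_swap_iff_of_covBy hab h₁ h₂]
    tauto
  rw [invLen_eq_card, hinv, card_insert_of_notMem, card_map, invLen_eq_card]
  simp [mem_map_equiv, hab.lt.not_gt]

theorem invLen_mul_swap_of_gt (hab : a ⋖ b) (h : u b < u a) :
    invLen (u * swap a b) + 1 = invLen u := by
  simpa [mul_assoc] using (invLen_mul_swap_of_lt (u := u * swap a b) hab (by simpa using h)).symm

theorem invLen_swap (hab : a ⋖ b) : invLen (swap a b) = 1 := by
  simpa [invLen_one] using invLen_mul_swap_of_lt (u := 1) hab hab.lt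

end Length

section WeakOrder

variable {n : ℕ} {u v w : SymGrp n}

def weakStep (u v : SymGrp n) : Prop :=
  ∃ a b : Fin n, a ⋖ b ∧ u a < u b ∧ v = u * swap a b

theorem wleR_refl (u : SymGrp n) : wleR u u := by
  simp [wleR, invLen_one]

theorem wleR.trans (huv : wleR u v) (hvw : wleR v w) : wleR u w := by
  have h₁ := invLen_mul_le (u⁻¹ * v) (v⁻¹ * w)
  have h₂ := invLen_mul_le u (u⁻¹ * w)
  simp only [mul_assoc, mul_inv_cancel_left] at h₁ h₂
  unfold wleR at *
  omega

theorem wleR.eq_of_invLen_eq (h : wleR u v) (hl : invLen u = invLen v) : u = v := by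
  unfold wleR at h
  exact inv_mul_eq_one.1 (invLen_eq_zero_iff.1 (by omega))

theorem wleR.invLen_le (h : wleR u v) : invLen u ≤ invLen v :=
  h ▸ Nat.le_add_right _ _

theorem weakStep.invLen_eq (h : weakStep u v) : invLen v = invLen u + 1 := by
  obtain ⟨a, b, hab, hlt, rfl⟩ := h
  exact invLen_mul_swap_of_lt hab hlt

theorem weakStep.wleR (h : weakStep u v) : wleR u v := by
  obtain ⟨a, b, hab, hlt, rfl⟩ := h
  rw [wleR, inv_mul_cancel_left, invLen_swap hab, invLen_mul_swap_of_lt hab hlt]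

theorem exists_weakStep_of_wleR (h : wleR u v) (hne : u ≠ v) :
    ∃ w, weakStep u w ∧ wleR w v := by
  -- `s = swap a b` shortens `u⁻¹ v` on the left; `u s` must then be longer than `u`, since
  -- otherwise `ℓ v ≤ ℓ (u s) + ℓ (s u⁻¹ v)` would fall below `ℓ u + ℓ (u⁻¹ v)`.
  obtain ⟨a, b, hab, hdesc⟩ := Perm.exists_covBy_lt_of_ne_one (σ := v⁻¹ * u)
    (mt inv_mul_eq_one.1 (Ne.symm hne))
  have hrest : invLen ((u * swap a b)⁻¹ * v) + 1 = invLen (u⁻¹ * v) := by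
    have := invLen_mul_swap_of_gt hab hdesc
    rw [← invLen_inv, ← invLen_inv (v⁻¹ * u)] at this
    simpa [mul_assoc] using this
  have hlt : u a < u b := by
    refine (u.injective.ne hab.ne).lt_or_gt.resolve_right fun hgt => ?_
    have hdown := invLen_mul_swap_of_gt hab hgt
    have htri := invLen_mul_le (u * swap a b) ((u * swap a b)⁻¹ * v)
    rw [mul_inv_cancel_left] at htri
    unfold wleR at h
    omega
  refine ⟨u * swap a b, ⟨a, b, hab, hlt, rfl⟩, ?_⟩
  unfold wleR at h ⊢
  rw [invLen_mul_swap_of_lt hab hlt]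
  omega

theorem reflTransGen_weakStep_of_wleR {u v : SymGrp n} (h : wleR u v) :
    ReflTransGen weakStep u v := by
  by_cases huv : u = v
  · exact huv ▸ .refl
  obtain ⟨w, huw, hwv⟩ := exists_weakStep_of_wleR h huv
  exact .head huw (reflTransGen_weakStep_of_wleR hwv)
termination_by invLen v - invLen u
decreasing_by
  have := huw.invLen_eq
  have := hwv.invLen_le
  omega

theorem wleR_iff_reflTransGen_weakStep : wleR u v ↔ ReflTransGen weakStep u v :=
  ⟨reflTransGen_weakStep_of_wleR, fun h => by
    induction h with
    | refl => exact wleR_refl u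
    | tail _ hstep ih => exact ih.trans hstep.wleR⟩

theorem weakStep_iff_covBy :
    weakStep u v ↔ wleR u v ∧ u ≠ v ∧ ∀ z, wleR u z → wleR z v → z = u ∨ z = v := by
  refine ⟨fun h => ⟨h.wleR, fun huv => ?_, fun z huz hzv => ?_⟩, fun ⟨huv, hne, hcov⟩ => ?_⟩
  · have := h.invLen_eq
    rw [huv] at this
    omega
  · have := h.invLen_eq
    have := huz.invLen_le
    have := hzv.invLen_le
    rcases Nat.lt_or_ge (invLen z) (invLen v) with hz | hz
    · exact .inl (huz.eq_of_invLen_eq (by omega)).symm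
    · exact .inr (hzv.eq_of_invLen_eq (by omega))
  · obtain ⟨w, huw, hwv⟩ := exists_weakStep_of_wleR huv hne
    rcases hcov w huw.wleR hwv with rfl | rfl
    · have := huw.invLen_eq
      omega
    · exact huw

end WeakOrder

section Vertices

variable {n : ℕ} {c : Fin n → ℝ} {u v z : SymGrp n} {a b i j : Fin n}

theorem pvec_injective : Function.Injective (pvec (n := n)) := fun u v h =>
  inv_injective <| Equiv.ext fun i => Fin.ext (by simpa [pvec] using congrFun h i)

theorem pvec_swap_mul (i j : Fin n) (z : SymGrp n) : pvec (swap i j * z) = pvec z ∘ swap i j := by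
  ext p
  simp [pvec]

theorem dotProduct_comp_swap (c f : Fin n → ℝ) (i j : Fin n) :
    c ⬝ᵥ (f ∘ swap i j) = c ⬝ᵥ f + (c j - c i) * (f i - f j) := by
  rcases eq_or_ne i j with rfl | hij
  · simp
  rw [← sub_eq_iff_eq_add', dotProduct, dotProduct, ← sum_sub_distrib, Fintype.sum_eq_add i j hij]
  · simp only [Function.comp_apply, swap_apply_left, swap_apply_right]
    ring
  · rintro p ⟨hi, hj⟩
    simp [swap_apply_of_ne_of_ne hi hj]

def IsMaxVertex (c : Fin n → ℝ) (z : SymGrp n) : Prop :=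
  ∀ z', c ⬝ᵥ pvec z' ≤ c ⬝ᵥ pvec z

theorem IsMaxVertex.inv_lt_inv (hz : IsMaxVertex c z) (h : c i < c j) : z⁻¹ i < z⁻¹ j := by
  by_contra hle
  have hij : i ≠ j := fun e => h.ne (congrArg c e)
  have hpos : pvec z j < pvec z i := by
    simpa [pvec] using (not_lt.1 hle).lt_of_ne (z⁻¹.injective.ne hij.symm)
  have := hz (swap i j * z)
  rw [pvec_swap_mul, dotProduct_comp_swap] at this
  nlinarith

theorem IsMaxVertex.swap_mul (hz : IsMaxVertex c z) (h : c i = c j) :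
    IsMaxVertex c (swap i j * z) := fun z' => by
  rw [pvec_swap_mul, dotProduct_comp_swap, h, sub_self, zero_mul, add_zero]
  exact hz z'

theorem exists_isMaxVertex_iff (u : SymGrp n) (hab : a ⋖ b) :
    ∃ c : Fin n → ℝ, ∀ z, IsMaxVertex c z ↔ z = u ∨ z = u * swap a b := by
  -- weight of coordinate `i` is its position `u⁻¹ i`, with position `b` merged into `a`
  let c : Fin n → ℝ := fun i => ((if u⁻¹ i = b then a else u⁻¹ i : Fin n) : ℕ)
  have hc : ∀ x y, x < y → ¬(x = a ∧ y = b) → c (u x) < c (u y) := by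
    intro x y hxy hne
    have := Fin.val_eq_val_add_one_of_covBy hab
    rw [Fin.lt_def] at hxy
    simp only [Fin.ext_iff, not_and] at hne
    simp only [c, Perm.coe_inv, symm_apply_apply, Nat.cast_lt]
    split_ifs with h₁ h₂ h₂ <;> simp only [Fin.ext_iff] at h₁ h₂ <;> omega
  have hmax : ∀ z, IsMaxVertex c z → z = u ∨ z = u * swap a b := fun z hz => by
    rcases Perm.eq_one_or_eq_swap (σ := z⁻¹ * u) hab fun x y hxy hne =>
      hz.inv_lt_inv (hc x y hxy hne) with h | h
    · exact .inl (inv_mul_eq_one.1 h)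
    · exact .inr (by rw [inv_mul_eq_iff_eq_mul.1 h, mul_assoc, swap_mul_self, mul_one])
  have htie : c (u a) = c (u b) := by simp [c]
  have hswap : u * swap a b = swap (u a) (u b) * u := mul_swap_eq_swap_mul u a b
  obtain ⟨z₀, hz₀⟩ : ∃ z₀, IsMaxVertex c z₀ := Finite.exists_max _
  have hu : IsMaxVertex c u := by
    rcases hmax z₀ hz₀ with rfl | rfl
    · exact hz₀
    · simpa [hswap, ← mul_assoc] using hz₀.swap_mul htie
  refine ⟨c, fun z => ⟨hmax z, ?_⟩⟩
  rintro (rfl | rfl)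
  · exact hu
  · exact hswap ▸ hu.swap_mul htie

theorem exists_covBy_eq_mul_swap (hu : IsMaxVertex c u) (hv : IsMaxVertex c v) (huv : u ≠ v)
    (honly : ∀ z, IsMaxVertex c z → z = u ∨ z = v) : ∃ a b, a ⋖ b ∧ v = u * swap a b := by
  obtain ⟨a, b, hab, hdesc⟩ :=
    Perm.exists_covBy_lt_of_ne_one (σ := v⁻¹ * u) (mt inv_mul_eq_one.1 (Ne.symm huv))
  have htie : c (u a) = c (u b) := by
    rcases lt_trichotomy (c (u a)) (c (u b)) with h | h | h
    · exact absurd (hv.inv_lt_inv h) hdesc.not_gt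
    · exact h
    · exact absurd (hu.inv_lt_inv h) (by simpa using hab.lt.not_gt)
  refine ⟨a, b, hab, ?_⟩
  rw [mul_swap_eq_swap_mul]
  rcases honly _ (hu.swap_mul htie) with h | h
  · simp [hab.ne] at h
  · exact h.symm

end Vertices

section Permutahedron

variable {n : ℕ} {c : Fin n → ℝ} {u v w : SymGrp n} {a b : Fin n}

theorem norm_toLp_pvec (z : SymGrp n) :
    ‖WithLp.toLp 2 (pvec z)‖ = ‖WithLp.toLp 2 (pvec (1 : SymGrp n))‖ := by
  simp only [EuclideanSpace.norm_eq, pvec]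
  congr 1
  exact Equiv.sum_comp z⁻¹ fun i => ‖((i : ℕ) : ℝ) + 1‖ ^ 2

theorem eq_or_eq_of_pvec_mem_segment (h : pvec w ∈ segment ℝ (pvec u) (pvec v)) :
    w = u ∨ w = v := by
  -- all vertices lie on one Euclidean sphere, and a strictly convex norm admits no third point
  -- of that sphere on a chord
  by_contra! hne
  obtain ⟨α, β, hα, hβ, hαβ, hcomb⟩ := mem_openSegment_of_ne_left_right
    (pvec_injective.ne hne.1.symm) (pvec_injective.ne hne.2.symm) h
  have huv : u ≠ v := by
    rintro rfl
    rw [← add_smul, hαβ, one_smul] at hcomb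
    exact hne.1 (pvec_injective hcomb.symm)
  have := norm_combo_lt_of_ne (norm_toLp_pvec u).le (norm_toLp_pvec v).le
    ((WithLp.toLp_injective 2).ne (pvec_injective.ne huv)) hα hβ hαβ
  rw [← WithLp.toLp_smul, ← WithLp.toLp_smul, ← WithLp.toLp_add, hcomb, norm_toLp_pvec] at this
  exact lt_irrefl _ this

theorem permPoly_eq_convexHull_range : PermPoly n = convexHull ℝ (Set.range pvec) := by
  simp only [PermPoly, Set.range, eq_comm]

theorem toExposed_permPoly (l : StrongDual ℝ (Fin n → ℝ)) (hl : ∀ x, l x = c ⬝ᵥ x) :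
    l.toExposed (PermPoly n) = convexHull ℝ (pvec '' {z | IsMaxVertex c z}) := by
  rw [permPoly_eq_convexHull_range]
  have hexp : IsExposed ℝ (convexHull ℝ (Set.range pvec)) (l.toExposed _) :=
    ContinuousLinearMap.toExposed.isExposed
  refine (hexp.eq_convexHull_inter (Set.finite_range pvec)).trans ?_
  rw [l.inter_toExposed_convexHull]
  congr 1
  ext x
  simp only [Set.mem_ofPred_eq, Set.forall_mem_range, hl, Set.mem_image]
  constructor
  · rintro ⟨⟨z, rfl⟩, hz⟩
    exact ⟨z, hz, rfl⟩
  · rintro ⟨z, hz, rfl⟩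
    exact ⟨⟨z, rfl⟩, hz⟩

theorem isExposed_segment_pvec_mul_swap (u : SymGrp n) (hab : a ⋖ b) :
    IsExposed ℝ (PermPoly n) (segment ℝ (pvec u) (pvec (u * swap a b))) := fun _ => by
  obtain ⟨c, hc⟩ := exists_isMaxVertex_iff u hab
  refine ⟨LinearMap.toContinuousLinearMap (dotProductEquiv ℝ (Fin n) c), ?_⟩
  rw [← ContinuousLinearMap.toExposed, toExposed_permPoly _ fun x => rfl, ← convexHull_pair]
  congr 1
  ext x
  simp [hc, eq_comm]

theorem exists_eq_pvec_mul_swap_of_isExposed {x y : Fin n → ℝ} (hxy : x ≠ y)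
    (h : IsExposed ℝ (PermPoly n) (segment ℝ x y)) :
    ∃ u a b, a ⋖ b ∧ x = pvec u ∧ y = pvec (u * swap a b) := by
  obtain ⟨l, hl⟩ := h ⟨x, left_mem_segment ℝ x y⟩
  let c := (dotProductEquiv ℝ (Fin n)).symm l.toLinearMap
  have hlc : ∀ x, l x = c ⬝ᵥ x := fun x => by
    rw [← dotProductEquiv_apply_apply, LinearEquiv.apply_symm_apply]
    rfl
  rw [← ContinuousLinearMap.toExposed, toExposed_permPoly l hlc] at hl
  have hvert : ∀ {p}, p ∈ (segment ℝ x y).extremePoints ℝ → ∃ z, IsMaxVertex c z ∧ pvec z = p :=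
    fun {p} hp => by
      rw [hl] at hp
      exact (extremePoints_convexHull_subset hp : p ∈ pvec '' _)
  obtain ⟨u, hu, rfl⟩ := hvert (left_mem_extremePoints_segment x y)
  obtain ⟨v, hv, rfl⟩ := hvert (segment_symm ℝ y _ ▸ left_mem_extremePoints_segment y _)
  have honly : ∀ z, IsMaxVertex c z → z = u ∨ z = v := fun z hz =>
    eq_or_eq_of_pvec_mem_segment (hl ▸ subset_convexHull ℝ _ ⟨z, hz, rfl⟩)
  obtain ⟨a, b, hab, rfl⟩ := exists_covBy_eq_mul_swap hu hv (ne_of_apply_ne pvec hxy) honly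
  exact ⟨u, a, b, hab, rfl, rfl⟩

theorem rho_dotProduct_pvec_mul_swap (u : SymGrp n) (hab : a ⋖ b) :
    rho n ⬝ᵥ pvec (u * swap a b) = rho n ⬝ᵥ pvec u + (((u b : ℕ) : ℝ) - (u a : ℕ)) := by
  rw [mul_swap_eq_swap_mul, pvec_swap_mul, dotProduct_comp_swap]
  simp [rho, pvec, Fin.val_eq_val_add_one_of_covBy hab]

theorem oPerm_eq_map : oPerm n = Relation.Map weakStep pvec pvec := by
  ext x y
  constructor
  · rintro ⟨⟨hxy, hexp⟩, hrho⟩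
    obtain ⟨u, a, b, hab, rfl, rfl⟩ := exists_eq_pvec_mul_swap_of_isExposed hxy hexp
    change rho n ⬝ᵥ _ < rho n ⬝ᵥ _ at hrho
    rw [rho_dotProduct_pvec_mul_swap u hab, lt_add_iff_pos_right, sub_pos, Nat.cast_lt] at hrho
    exact ⟨u, _, ⟨a, b, hab, hrho, rfl⟩, rfl, rfl⟩
  · rintro ⟨u, _, ⟨a, b, hab, hlt, rfl⟩, rfl, rfl⟩
    refine ⟨⟨pvec_injective.ne (by simp [hab.ne]), isExposed_segment_pvec_mul_swap u hab⟩, ?_⟩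
    change rho n ⬝ᵥ _ < rho n ⬝ᵥ _
    rw [rho_dotProduct_pvec_mul_swap u hab, lt_add_iff_pos_right, sub_pos, Nat.cast_lt]
    exact hlt

end Permutahedron

/-- The 1-skeleton poset of the permutahedron with respect to
`O_ρ` is the right weak order on `S_n`, and `O_ρ` is the Hasse diagram (the
cover relation) of this poset. -/
theorem permutahedron_skeleton_is_weak_order {n : ℕ} :
    (∀ u v : SymGrp n,
      Relation.ReflTransGen (oPerm n) (pvec u) (pvec v) ↔ wleR u v) ∧
    (∀ u v : SymGrp n, oPerm n (pvec u) (pvec v) ↔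
      (wleR u v ∧ u ≠ v ∧ ∀ z, wleR u z → wleR z v → z = u ∨ z = v)) := by
  refine ⟨fun u v => ?_, fun u v => ?_⟩
  · rw [oPerm_eq_map, Relation.reflTransGen_map_iff pvec_injective, wleR_iff_reflTransGen_weakStep]
  · rw [oPerm_eq_map, Relation.map_apply_apply pvec_injective pvec_injective, weakStep_iff_covBy]
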